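/- Let $k, m$ be positive integers with $\gcd(k,m)=1$, and let $f_1, f_2 \in \mathbb{F}_{2^m}[X,Y]$ be linearized polynomials of the form $\sum_{i} (C_i X^{2^{ik}} + D_i Y^{2^{ik}})$ of degrees $2^{d_1 k}$ and $2^{d_2 k}$ respectively. If $f_1$ and $f_2$ have no common nonconstant factor, then the number of common zeros of $f_1$ and $f_2$ in $\mathbb{F}_{2^m} \times \mathbb{F}_{2^m}$ is at most $2^{d_1 + d_2}$. -/

import Mathlib

/-!
Write `σ = Frob ^ k`. Both polynomials have the shape `L(X) + M(Y)` with `σ`-linearized `L`, `M`,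
which act on `𝔽_{2^m}` as additive maps, and since `gcd(k, m) = 1` the fixed field of `σ` is
`𝔽₂`. Hence a nonzero `σ`-polynomial of `σ`-degree `e` has at most `2 ^ e` roots: a nonzero root
`x₀` splits off the right factor `x ↦ (x / x₀) ^ σ - x / x₀`, whose kernel is `x₀ 𝔽₂`.

A Euclidean algorithm on the `Y`-parts, replacing `f₁` by `f₁ - c f₂ ^ (σ ^ s)` to cancel the
leading term of `M₁` against that of `M₂`, keeps the common zeros, the coprimality and the bounds
`deg L₁ + deg M₂ ≤ d₁ + d₂`, `deg L₂ + deg M₁ ≤ d₁ + d₂`. It stops when one `Y`-part vanishes,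
say `M₁ = 0`. Coprimality excludes `L₁ = 0` (then `f₁ = 0`) and `M₂ = 0` (then `X` divides
both), and then `x` ranges over the kernel of `L₁` and, for each `x`, `y` over a coset of the
kernel of `M₂`.
-/

open Polynomial

theorem pow_eq_self_of_coprime {M : Type*} [Monoid M] {n k m : ℕ} (hkm : k.Coprime m) {x : M}
    (hk : x ^ n ^ k = x) (hm : x ^ n ^ m = x) : x ^ n = x := by
  have hperiodic (j : ℕ) (hj : x ^ n ^ j = x) : Function.IsPeriodicPt (· ^ n) j x := by
    rwa [Function.IsPeriodicPt, Function.IsFixedPt, pow_iterate]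
  simpa [Function.IsPeriodicPt, Function.IsFixedPt, pow_iterate, Nat.Coprime.gcd_eq_one hkm]
    using (hperiodic k hk).gcd (hperiodic m hm)

theorem AddSubgroup.card_eq_card_ker_inf_mul_card_map {A B : Type*} [AddGroup A] [AddGroup B]
    (f : A →+ B) (H : AddSubgroup A) :
    Nat.card H = Nat.card (f.ker ⊓ H : AddSubgroup A) * Nat.card (H.map f) := by
  rw [← AddSubgroup.relIndex_bot_left, ← AddSubgroup.relIndex_bot_left,
    ← AddSubgroup.relIndex_ker, AddSubgroup.relIndex_inf_mul_relIndex, bot_inf_eq]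

theorem AddMonoidHom.card_ker_comp_le {A B C : Type*} [AddGroup A] [AddGroup B] [AddGroup C]
    [Finite A] [Finite B] (g : B →+ C) (f : A →+ B) :
    Nat.card (g.comp f).ker ≤ Nat.card f.ker * Nat.card g.ker := by
  rw [AddSubgroup.card_eq_card_ker_inf_mul_card_map f]
  gcongr
  · exact AddSubgroup.card_le_of_le inf_le_left
  · exact AddSubgroup.card_le_of_le (AddSubgroup.map_le_iff_le_comap.mpr (g.comap_ker f).ge)

theorem ncard_setOf_triangular_le {A A' B C : Type*} [AddGroup A] [AddGroup A'] [AddCommGroup B]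
    [AddGroup C] [Finite A] [Finite A'] (u : A →+ C) (v : A →+ B) (w : A' →+ B) :
    {p : A × A' | u p.1 = 0 ∧ v p.1 + w p.2 = 0}.ncard ≤ Nat.card u.ker * Nat.card w.ker := by
  set Φ : A × A' →+ C × B :=
    (u.comp (AddMonoidHom.fst A A')).prod
      ((v.comp (AddMonoidHom.fst A A')) + (w.comp (AddMonoidHom.snd A A')))
  have hΦ : {p : A × A' | u p.1 = 0 ∧ v p.1 + w p.2 = 0} = Φ.ker := by
    ext p
    simp [Φ, Prod.ext_iff]
  rw [hΦ, ← Nat.card_coe_set_eq, SetLike.coe_sort_coe,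
    AddSubgroup.card_eq_card_ker_inf_mul_card_map (AddMonoidHom.fst A A'), mul_comm]
  have hfst {p : A × A'} (hp : p ∈ (AddMonoidHom.fst A A').ker ⊓ Φ.ker) : p.1 = 0 :=
    (AddSubgroup.mem_inf.mp hp).1
  gcongr
  · refine AddSubgroup.card_le_of_le (AddSubgroup.map_le_iff_le_comap.mpr fun p hp => ?_)
    simpa [Φ] using (Prod.ext_iff.mp hp).1
  · refine Nat.card_le_card_of_injective (fun p => ⟨p.1.2, ?_⟩) fun p q hpq =>
      Subtype.ext (Prod.ext ((hfst p.2).trans (hfst q.2).symm) (congrArg Subtype.val hpq))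
    simpa [Φ, hfst p.2] using (Prod.ext_iff.mp (AddSubgroup.mem_inf.mp p.2).2).2

section Linearized

variable {F : Type*} [CommRing F] (k : ℕ)
variable {R : Type*} [CommRing R] [Algebra F R] [ExpChar R 2]

/-- The `σ`-linearized polynomial `∑ aᵢ σⁱ`, `σ = Frob ^ k`, is encoded by `∑ aᵢ Xⁱ : F[X]`; it acts
on any commutative `F`-algebra of characteristic `2` as `r ↦ ∑ aᵢ r ^ 2 ^ (i * k)`. -/
noncomputable def linearizedEval : F[X] →ₗ[F] (R →+ R) :=
  Polynomial.lsum fun i => LinearMap.toSpanSingleton F (R →+ R)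
    (iterateFrobenius R 2 (i * k)).toAddMonoidHom

theorem linearizedEval_apply (p : F[X]) (r : R) :
    linearizedEval k p r = p.sum fun i a => a • r ^ 2 ^ (i * k) := by
  simp [linearizedEval, Polynomial.sum_def, iterateFrobenius_def]

@[simp]
theorem linearizedEval_monomial (n : ℕ) (a : F) (r : R) :
    linearizedEval k (monomial n a) r = a • r ^ 2 ^ (n * k) := by
  rw [linearizedEval_apply, sum_monomial_index _ _ (zero_smul F _)]

theorem linearizedEval_C (a : F) (r : R) : linearizedEval k (C a) r = a • r := by
  simp [← monomial_zero_left]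

theorem linearizedEval_X_sub_one (r : R) :
    linearizedEval k (X - 1 : F[X]) r = r ^ 2 ^ k - r := by
  rw [map_sub, AddMonoidHom.sub_apply, ← monomial_one_one_eq_X, ← C_1, linearizedEval_monomial,
    linearizedEval_C, one_mul, one_smul, one_smul]

theorem map_linearizedEval {S : Type*} [CommRing S] [Algebra F S] [ExpChar S 2] (φ : R →ₐ[F] S)
    (p : F[X]) (r : R) : φ (linearizedEval k p r) = linearizedEval k p (φ r) := by
  simp [linearizedEval_apply, Polynomial.sum_def, map_sum]

theorem dvd_linearizedEval (p : F[X]) (r : R) : r ∣ linearizedEval k p r := by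
  rw [linearizedEval_apply]
  refine Finset.dvd_sum fun i _ => ?_
  dsimp only
  rw [Algebra.smul_def]
  exact dvd_mul_of_dvd_right (dvd_pow_self r (pow_ne_zero _ two_ne_zero)) _

variable [ExpChar F 2]

theorem linearizedEval_apply_one (p : F[X]) : linearizedEval k p (1 : F) = p.eval 1 := by
  simp [linearizedEval_apply, eval_eq_sum]

/-- The product of the skew polynomial ring `F[σ]`: `(a Xⁱ) ∘ q = a Xⁱ · σⁱ(q)`. -/
noncomputable def linearizedComp (p q : F[X]) : F[X] :=
  p.sum fun i a => monomial i a * q.map (iterateFrobenius F 2 (i * k))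

theorem linearizedComp_add_left (p₁ p₂ q : F[X]) :
    linearizedComp k (p₁ + p₂) q = linearizedComp k p₁ q + linearizedComp k p₂ q :=
  sum_add_index _ _ _ (fun _ => by simp) fun _ _ _ => by rw [map_add, add_mul]

theorem linearizedComp_monomial_left (n : ℕ) (a : F) (q : F[X]) :
    linearizedComp k (monomial n a) q = monomial n a * q.map (iterateFrobenius F 2 (n * k)) :=
  sum_monomial_index _ _ (by simp)

theorem linearizedEval_linearizedComp (p q : F[X]) (r : R) :
    linearizedEval k (linearizedComp k p q) r = linearizedEval k p (linearizedEval k q r) := by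
  induction p using Polynomial.induction_on' with
  | add p₁ p₂ h₁ h₂ => simp [linearizedComp_add_left, h₁, h₂]
  | monomial n a =>
    rw [linearizedComp_monomial_left]
    induction q using Polynomial.induction_on' with
    | add q₁ q₂ h₁ h₂ => simp [Polynomial.map_add, mul_add, h₁, h₂, add_pow_expChar_pow]
    | monomial j b =>
      simp [monomial_mul_monomial, iterateFrobenius_def, _root_.smul_pow, mul_smul, ← pow_mul,
        ← pow_add, add_mul, add_comm]

theorem coeff_linearizedComp_C (p : F[X]) (a : F) (n : ℕ) :
    (linearizedComp k p (C a)).coeff n = p.coeff n * a ^ 2 ^ (n * k) := by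
  simp only [linearizedComp, Polynomial.map_C, iterateFrobenius_def, monomial_mul_C,
    Polynomial.sum_def, finsetSum_coeff, coeff_monomial]
  rw [Finset.sum_ite_eq', ite_eq_left_iff]
  intro h
  rw [notMem_support_iff.mp h, zero_mul]

theorem linearizedComp_X_sub_one (q : F[X]) : linearizedComp k q (X - 1) = q * (X - 1) := by
  conv_rhs => rw [← sum_monomial_eq q]
  simp [linearizedComp, Polynomial.sum_def, Finset.sum_mul]

theorem natDegree_linearizedComp_monomial_le (s : ℕ) (c : F) (p : F[X]) :
    (linearizedComp k (monomial s c) p).natDegree ≤ s + p.natDegree := by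
  rw [linearizedComp_monomial_left]
  exact natDegree_mul_le.trans (add_le_add (natDegree_monomial_le c) natDegree_map_le)

end Linearized

section Kernel

variable {F : Type*} [Field F] [ExpChar F 2] {k : ℕ}

/-- After the substitution `x ↦ x₀ x`, the root `x₀` becomes `1`, an ordinary root of the
coefficient polynomial, so `X - 1` divides it. -/
theorem exists_linearizedEval_eq_comp {p : F[X]} (hp : p ≠ 0) {x₀ : F} (hx₀ : x₀ ≠ 0)
    (hroot : linearizedEval k p x₀ = 0) :
    ∃ q : F[X], q ≠ 0 ∧ q.natDegree < p.natDegree ∧ (linearizedEval k p : F →+ F) =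
      ((linearizedEval k q).comp (linearizedEval k (X - 1 : F[X]))).comp
        (AddMonoidHom.mulLeft x₀⁻¹) := by
  set p' := linearizedComp k p (C x₀)
  have hp' : p' ≠ 0 := fun h => by
    have := congrArg (fun r : F[X] => r.coeff p.natDegree) h
    simp [p', coeff_linearizedComp_C, hp, hx₀] at this
  have hdeg : p'.natDegree ≤ p.natDegree := natDegree_le_iff_coeff_eq_zero.mpr fun n hn => by
    rw [coeff_linearizedComp_C, coeff_eq_zero_of_natDegree_lt hn, zero_mul]
  have hfactor : p' = p' /ₘ (X - C 1) * (X - 1) := by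
    rw [mul_comm, ← C_1, eq_comm, mul_divByMonic_eq_iff_isRoot, IsRoot,
      ← linearizedEval_apply_one, linearizedEval_linearizedComp, linearizedEval_C, smul_eq_mul,
      mul_one, hroot]
  set q := p' /ₘ (X - C 1)
  have hq : q ≠ 0 := fun h => hp' (by rw [hfactor, h, zero_mul])
  refine ⟨q, hq, ?_, ?_⟩
  · have := congrArg natDegree hfactor
    rw [natDegree_mul hq (by simpa using X_sub_C_ne_zero (1 : F)), ← C_1,
      natDegree_X_sub_C] at this
    omega
  · ext x
    have hx : x = x₀ * (x₀⁻¹ * x) := by field_simp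
    rw [AddMonoidHom.comp_apply, AddMonoidHom.comp_apply, ← linearizedEval_linearizedComp,
      linearizedComp_X_sub_one, ← hfactor, linearizedEval_linearizedComp, linearizedEval_C,
      AddMonoidHom.coe_mulLeft, smul_eq_mul, ← hx]

variable [Finite F] (hfix : ∀ x : F, x ^ 2 ^ k = x → x = 0 ∨ x = 1)
include hfix

theorem card_ker_linearizedEval_X_sub_one_le :
    Nat.card (linearizedEval k (X - 1 : F[X]) : F →+ F).ker ≤ 2 := by
  have hsub : ((linearizedEval k (X - 1 : F[X]) : F →+ F).ker : Set F) ⊆ {0, 1} := fun x hx =>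
    hfix x (sub_eq_zero.mp (by rw [← linearizedEval_X_sub_one (F := F)]; exact hx))
  rw [← SetLike.coe_sort_coe, Nat.card_coe_set_eq]
  exact (Set.ncard_le_ncard hsub).trans (Set.ncard_pair zero_ne_one).le

theorem card_ker_linearizedEval_le {p : F[X]} (hp : p ≠ 0) :
    Nat.card (linearizedEval k p : F →+ F).ker ≤ 2 ^ p.natDegree := by
  induction hn : p.natDegree using Nat.strong_induction_on generalizing p with
  | _ n ih =>
  rcases eq_or_ne (linearizedEval k p : F →+ F).ker ⊥ with hker | hker
  · simp [hker, Nat.one_le_two_pow]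
  obtain ⟨⟨x₀, hx₀⟩, hx₀0⟩ := AddSubgroup.ne_bot_iff_exists_ne_zero.mp hker
  obtain ⟨q, hq, hdeg, heq⟩ :=
    exists_linearizedEval_eq_comp hp (by simpa using hx₀0) (AddMonoidHom.mem_ker.mp hx₀)
  have hscale : (AddMonoidHom.mulLeft x₀⁻¹ : F →+ F).ker = ⊥ :=
    (AddMonoidHom.ker_eq_bot_iff _).mpr (mul_right_injective₀ (by simpa using hx₀0))
  rw [heq]
  calc _ ≤ 1 * (2 * 2 ^ q.natDegree) := by
        refine (AddMonoidHom.card_ker_comp_le _ _).trans ?_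
        rw [hscale, AddSubgroup.card_bot]
        gcongr
        refine (AddMonoidHom.card_ker_comp_le _ _).trans ?_
        gcongr
        · exact card_ker_linearizedEval_X_sub_one_le hfix
        · exact ih _ (hn ▸ hdeg) hq rfl
    _ ≤ 2 ^ n := by
        rw [one_mul, ← pow_succ']
        exact Nat.pow_le_pow_right two_pos (by omega)

end Kernel

section TwoVariables

variable {F : Type*} [CommRing F]

def commonZeros (f₁ f₂ : MvPolynomial (Fin 2) F) : Set (F × F) :=
  {p | MvPolynomial.eval ![p.1, p.2] f₁ = 0 ∧ MvPolynomial.eval ![p.1, p.2] f₂ = 0}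

theorem commonZeros_comm (f₁ f₂ : MvPolynomial (Fin 2) F) :
    commonZeros f₁ f₂ = commonZeros f₂ f₁ :=
  Set.ext fun _ => and_comm

theorem commonZeros_eq_of_dvd_sub {f₁ f₁' f₂ : MvPolynomial (Fin 2) F} (h : f₂ ∣ f₁ - f₁') :
    commonZeros f₁' f₂ = commonZeros f₁ f₂ := by
  obtain ⟨g, hg⟩ := h
  obtain rfl : f₁' = f₁ - f₂ * g := by rw [← hg, sub_sub_cancel]
  exact Set.ext fun p => and_congr_left fun h₂ => by simp [h₂]

variable [ExpChar F 2] (k : ℕ)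

noncomputable def linearized₂ (L M : F[X]) : MvPolynomial (Fin 2) F :=
  linearizedEval k L (MvPolynomial.X 0) + linearizedEval k M (MvPolynomial.X 1)

theorem eval_linearized₂ (L M : F[X]) (x y : F) :
    MvPolynomial.eval ![x, y] (linearized₂ k L M) =
      linearizedEval k L x + linearizedEval k M y := by
  have h (p : F[X]) (i : Fin 2) :
      MvPolynomial.eval ![x, y] (linearizedEval k p (MvPolynomial.X i)) =
        linearizedEval k p (![x, y] i) := by
    simpa using map_linearizedEval k (MvPolynomial.aeval ![x, y]) p (MvPolynomial.X i)
  simp [linearized₂, h]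

theorem linearized₂_sub_linearizedComp (L₁ M₁ L₂ M₂ q : F[X]) :
    linearized₂ k (L₁ - linearizedComp k q L₂) (M₁ - linearizedComp k q M₂) =
      linearized₂ k L₁ M₁ - linearizedEval k q (linearized₂ k L₂ M₂) := by
  simp only [linearized₂, map_sub, map_add, AddMonoidHom.sub_apply,
    linearizedEval_linearizedComp]
  abel

theorem linearized₂_sum_monomial (s : Finset ℕ) (a b : ℕ → F) :
    linearized₂ k (∑ i ∈ s, monomial i (a i)) (∑ i ∈ s, monomial i (b i)) =
      ∑ i ∈ s, (MvPolynomial.C (a i) * MvPolynomial.X 0 ^ 2 ^ (i * k) +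
        MvPolynomial.C (b i) * MvPolynomial.X 1 ^ 2 ^ (i * k)) := by
  simp [linearized₂, Finset.sum_add_distrib, MvPolynomial.smul_eq_C_mul]

end TwoVariables

section Reduction

variable {F : Type*} [Field F] [ExpChar F 2] {k : ℕ}

theorem exists_degree_sub_linearizedComp_lt {M₁ M₂ : F[X]} (hM₁ : M₁ ≠ 0) (hM₂ : M₂ ≠ 0)
    (h : M₂.natDegree ≤ M₁.natDegree) : ∃ c : F,
      (M₁ - linearizedComp k (monomial (M₁.natDegree - M₂.natDegree) c) M₂).degree <
        M₁.degree := by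
  set s := M₁.natDegree - M₂.natDegree
  set c := M₁.leadingCoeff / M₂.leadingCoeff ^ 2 ^ (s * k)
  have hc : c ≠ 0 := by simp [c, hM₁, hM₂]
  refine ⟨c, degree_sub_lt_left ?_ hM₁ ?_⟩
  · rw [linearizedComp_monomial_left, degree_mul, degree_monomial _ hc, degree_map,
      degree_eq_natDegree hM₁, degree_eq_natDegree hM₂, ← Nat.cast_add]
    congr 1
    omega
  · rw [linearizedComp_monomial_left, leadingCoeff_mul, leadingCoeff_monomial, leadingCoeff_map,
      iterateFrobenius_def, div_mul_cancel₀ _ (by simp [hM₂])]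

variable [Finite F] (hfix : ∀ x : F, x ^ 2 ^ k = x → x = 0 ∨ x = 1)
include hfix

theorem ncard_commonZeros_linearized₂_zero_le {D : ℕ} {L₁ L₂ M₂ : F[X]}
    (hcop : IsRelPrime (linearized₂ k L₁ 0) (linearized₂ k L₂ M₂))
    (hD : L₁.natDegree + M₂.natDegree ≤ D) :
    (commonZeros (linearized₂ k L₁ 0) (linearized₂ k L₂ M₂)).ncard ≤ 2 ^ D := by
  have not_isUnit {g : MvPolynomial (Fin 2) F} (hg : MvPolynomial.eval ![0, 0] g = 0) :
      ¬IsUnit g := fun hu => (hu.map (MvPolynomial.eval ![0, 0])).ne_zero hg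
  have hL₁ : L₁ ≠ 0 := by
    rintro rfl
    refine not_isUnit (g := linearized₂ k L₂ M₂) (by simp [eval_linearized₂])
      (isRelPrime_zero_left.mp ?_)
    simpa [linearized₂] using hcop
  have hM₂ : M₂ ≠ 0 := by
    rintro rfl
    refine not_isUnit (g := MvPolynomial.X 0) (by simp) (hcop ?_ ?_) <;>
      simpa [linearized₂] using dvd_linearizedEval k _ _
  have hzeros : commonZeros (linearized₂ k L₁ 0) (linearized₂ k L₂ M₂) =
      {p : F × F | linearizedEval k L₁ p.1 = 0 ∧
        linearizedEval k L₂ p.1 + linearizedEval k M₂ p.2 = 0} := by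
    ext p
    simp [commonZeros, eval_linearized₂]
  rw [hzeros]
  calc _ ≤ 2 ^ L₁.natDegree * 2 ^ M₂.natDegree :=
        (ncard_setOf_triangular_le _ _ _).trans (Nat.mul_le_mul
          (card_ker_linearizedEval_le hfix hL₁) (card_ker_linearizedEval_le hfix hM₂))
    _ ≤ 2 ^ D := by
        rw [← pow_add]
        exact Nat.pow_le_pow_right two_pos hD

theorem ncard_commonZeros_linearized₂_le {D : ℕ} (L₁ M₁ L₂ M₂ : F[X])
    (hcop : IsRelPrime (linearized₂ k L₁ M₁) (linearized₂ k L₂ M₂))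
    (h₁ : L₁.natDegree + M₂.natDegree ≤ D) (h₂ : L₂.natDegree + M₁.natDegree ≤ D) :
    (commonZeros (linearized₂ k L₁ M₁) (linearized₂ k L₂ M₂)).ncard ≤ 2 ^ D := by
  induction hn : M₁.natDegree + M₂.natDegree using Nat.strong_induction_on
    generalizing L₁ M₁ L₂ M₂ with
  | _ n ih =>
  rcases eq_or_ne M₁ 0 with rfl | hM₁
  · exact ncard_commonZeros_linearized₂_zero_le hfix hcop h₁
  rcases eq_or_ne M₂ 0 with rfl | hM₂
  · rw [commonZeros_comm]
    exact ncard_commonZeros_linearized₂_zero_le hfix hcop.symm h₂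
  wlog hle : M₂.natDegree ≤ M₁.natDegree generalizing L₁ M₁ L₂ M₂
  · rw [commonZeros_comm]
    exact this L₂ M₂ L₁ M₁ hcop.symm h₂ h₁ (by omega) hM₂ hM₁ (by omega)
  obtain ⟨c, hlt⟩ := exists_degree_sub_linearizedComp_lt (k := k) hM₁ hM₂ hle
  set τ := linearizedComp k (monomial (M₁.natDegree - M₂.natDegree) c)
  have hdvd : linearized₂ k L₂ M₂ ∣
      linearized₂ k L₁ M₁ - linearized₂ k (L₁ - τ L₂) (M₁ - τ M₂) := by
    rw [linearized₂_sub_linearizedComp, sub_sub_cancel]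
    exact dvd_linearizedEval k _ _
  have hcop' : IsRelPrime (linearized₂ k (L₁ - τ L₂) (M₁ - τ M₂)) (linearized₂ k L₂ M₂) := by
    obtain ⟨g, hg⟩ := hdvd
    exact IsRelPrime.of_add_mul_left_left (z := g) (by rwa [← hg, add_sub_cancel])
  have h₁' : (L₁ - τ L₂).natDegree + M₂.natDegree ≤ D := by
    have := natDegree_sub_le L₁ (τ L₂)
    have : (τ L₂).natDegree ≤ M₁.natDegree - M₂.natDegree + L₂.natDegree :=
      natDegree_linearizedComp_monomial_le k _ c L₂
    omega
  have h₂' : L₂.natDegree + (M₁ - τ M₂).natDegree ≤ D := by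
    have := natDegree_le_natDegree hlt.le
    omega
  rw [← commonZeros_eq_of_dvd_sub hdvd]
  rcases eq_or_ne (M₁ - τ M₂) 0 with h0 | h0
  · rw [h0] at hcop' ⊢
    exact ncard_commonZeros_linearized₂_zero_le hfix hcop' h₁'
  · have := natDegree_lt_natDegree h0 hlt
    exact ih _ (by omega) _ _ _ _ hcop' h₁' h₂' rfl

end Reduction

theorem MvPolynomial.isRelPrime_of_isRelPrime_map {σ K L : Type*} [Field K] [Field L]
    (φ : K →+* L) {p q : MvPolynomial σ K} (h : IsRelPrime (map φ p) (map φ q)) :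
    IsRelPrime p q := by
  intro g hp hq
  have hu := h (map_dvd (map φ) hp) (map_dvd (map φ) hq)
  rw [MvPolynomial.isUnit_iff] at hu ⊢
  simpa [coeff_map] using hu

theorem stmt5_general (m k d₁ d₂ : ℕ) (hm : 0 < m) (hgcd : Nat.gcd k m = 1)
    (C₁ D₁ C₂ D₂ : ℕ → GaloisField 2 m)
    (f₁ f₂ : MvPolynomial (Fin 2) (GaloisField 2 m))
    (hf₁ : f₁ = ∑ i ∈ Finset.range (d₁ + 1),
      (MvPolynomial.C (C₁ i) * MvPolynomial.X 0 ^ (2 ^ (i * k)) +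
       MvPolynomial.C (D₁ i) * MvPolynomial.X 1 ^ (2 ^ (i * k))))
    (hf₂ : f₂ = ∑ i ∈ Finset.range (d₂ + 1),
      (MvPolynomial.C (C₂ i) * MvPolynomial.X 0 ^ (2 ^ (i * k)) +
       MvPolynomial.C (D₂ i) * MvPolynomial.X 1 ^ (2 ^ (i * k))))
    (hcop : ∀ g : MvPolynomial (Fin 2) (AlgebraicClosure (GaloisField 2 m)),
      g ∣ MvPolynomial.map (algebraMap (GaloisField 2 m) (AlgebraicClosure (GaloisField 2 m))) f₁ →
      g ∣ MvPolynomial.map (algebraMap (GaloisField 2 m) (AlgebraicClosure (GaloisField 2 m))) f₂ →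
      IsUnit g) :
    {p : GaloisField 2 m × GaloisField 2 m |
      MvPolynomial.eval ![p.1, p.2] f₁ = 0 ∧ MvPolynomial.eval ![p.1, p.2] f₂ = 0}.ncard
      ≤ 2 ^ (d₁ + d₂) := by
  have hfix (x : GaloisField 2 m) (hx : x ^ 2 ^ k = x) : x = 0 ∨ x = 1 := by
    have hxm : x ^ 2 ^ m = x := by
      have := Fintype.ofFinite (GaloisField 2 m)
      rw [← GaloisField.card 2 m hm.ne', Nat.card_eq_fintype_card, FiniteField.pow_card]
    exact IsIdempotentElem.iff_eq_zero_or_one.mp (by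
      simpa [IsIdempotentElem, sq] using pow_eq_self_of_coprime hgcd hx hxm)
  have hdeg (d : ℕ) (a : ℕ → GaloisField 2 m) :
      (∑ i ∈ Finset.range (d + 1), monomial i (a i)).natDegree ≤ d :=
    natDegree_sum_le_of_forall_le _ _ fun i hi =>
      (natDegree_monomial_le _).trans (Finset.mem_range_succ_iff.mp hi)
  rw [← linearized₂_sum_monomial] at hf₁ hf₂
  subst hf₁ hf₂
  exact ncard_commonZeros_linearized₂_le hfix _ _ _ _
    (MvPolynomial.isRelPrime_of_isRelPrime_map _ hcop) (add_le_add (hdeg d₁ C₁) (hdeg d₂ D₂))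
    ((add_le_add (hdeg d₂ C₂) (hdeg d₁ D₁)).trans_eq (add_comm d₂ d₁))

/-- If two 2-variable linearized polynomials over `𝔽_{2^m}` of the form
`∑ᵢ (Cᵢ X^(2^(ik)) + Dᵢ Y^(2^(ik)))`, of degrees `2^(d₁k)` and `2^(d₂k)` with
`gcd(k,m)=1`, have no common nonconstant factor over the algebraic closure, then they
have at most `2^(d₁+d₂)` common zeros in `𝔽_{2^m} × 𝔽_{2^m}`. -/
theorem stmt5 (m k d₁ d₂ : ℕ) (hm : 0 < m) (hk : 0 < k) (hgcd : Nat.gcd k m = 1)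
    (C₁ D₁ C₂ D₂ : ℕ → GaloisField 2 m)
    (f₁ f₂ : MvPolynomial (Fin 2) (GaloisField 2 m))
    (hf₁ : f₁ = ∑ i ∈ Finset.range (d₁ + 1),
      (MvPolynomial.C (C₁ i) * MvPolynomial.X 0 ^ (2 ^ (i * k)) +
       MvPolynomial.C (D₁ i) * MvPolynomial.X 1 ^ (2 ^ (i * k))))
    (hf₂ : f₂ = ∑ i ∈ Finset.range (d₂ + 1),
      (MvPolynomial.C (C₂ i) * MvPolynomial.X 0 ^ (2 ^ (i * k)) +
       MvPolynomial.C (D₂ i) * MvPolynomial.X 1 ^ (2 ^ (i * k))))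
    (hd₁ : C₁ d₁ ≠ 0 ∨ D₁ d₁ ≠ 0) (hd₂ : C₂ d₂ ≠ 0 ∨ D₂ d₂ ≠ 0)
    (hcop : ∀ g : MvPolynomial (Fin 2) (AlgebraicClosure (GaloisField 2 m)),
      g ∣ MvPolynomial.map (algebraMap (GaloisField 2 m) (AlgebraicClosure (GaloisField 2 m))) f₁ →
      g ∣ MvPolynomial.map (algebraMap (GaloisField 2 m) (AlgebraicClosure (GaloisField 2 m))) f₂ →
      IsUnit g) :
    {p : GaloisField 2 m × GaloisField 2 m |
      MvPolynomial.eval ![p.1, p.2] f₁ = 0 ∧ MvPolynomial.eval ![p.1, p.2] f₂ = 0}.ncard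
      ≤ 2 ^ (d₁ + d₂) :=
  stmt5_general m k d₁ d₂ hm hgcd C₁ D₁ C₂ D₂ f₁ f₂ hf₁ hf₂ hcop
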